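/- Let μ1, μ2 be nonzero real numbers and set μ3 = μ1, μ4 = μ2, and let D = diag(μ1, μ2, μ3, μ4). The weighted Hessian D⁻¹H, where H is the Hessian matrix of V at the point (0, π/2, π, 3π/2), has characteristic polynomial X · (X − (2μ1 − 3μ2)/2) · (X − (−3μ1 + 2μ2)/2) · (X − (μ1 + μ2)); equivalently, its eigenvalues are 0, (2μ1 − 3μ2)/2, (−3μ1 + 2μ2)/2, and μ1 + μ2. -/

import Mathlib

/-!
With the even kernel `g x = cos x + log (2 - 2 cos x) / 2` one has
`V = (∑ μᵢ² - ∑ᵢ ∑ⱼ μᵢ μⱼ g (θᵢ - θⱼ)) / 2`, and `θₖ` enters only through the differences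
`θₖ - θⱼ`. Hence `∂ₖV = -μₖ ∑ⱼ μⱼ g' (θₖ - θⱼ)` and
`Hₖₗ = μₖ μₗ g'' (θₗ - θₖ) - δₖₗ μₗ ∑ⱼ μⱼ g'' (θₗ - θⱼ)` with `g'' = -cos - 1 / (2 - 2 cos)`.
At the square all differences are multiples of `π / 2`, where `g''` is `-1/2` (`cos = 0`) or
`3/4` (`cos = -1`), so `D⁻¹H` is an explicit matrix whose characteristic polynomial is
computed directly.
-/

open Real Polynomial

/-- The potential `V` for the (1+4)-vortex problem with circulation
parameters `μ` and angular positions `θ`. -/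
noncomputable def V (μ θ : Fin 4 → ℝ) : ℝ :=
  -∑ i : Fin 4, ∑ j ∈ Finset.Ioi i,
      μ i * μ j *
        (Real.cos (θ i - θ j) + (1 / 2) * Real.log (2 - 2 * Real.cos (θ i - θ j)))

/-- The partial derivative `∂V/∂θ_k` at the point `θ`. -/
noncomputable def partialV (μ θ : Fin 4 → ℝ) (k : Fin 4) : ℝ :=
  deriv (fun t => V μ (Function.update θ k t)) (θ k)

/-- `θ` is a critical point of `V`: all four partial derivatives vanish. -/
def IsCriticalPt (μ θ : Fin 4 → ℝ) : Prop :=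
  ∀ k : Fin 4, partialV μ θ k = 0

/-- The Hessian matrix of `V` at `θ`, `H k l = ∂²V/∂θ_k ∂θ_l`. -/
noncomputable def hessV (μ θ : Fin 4 → ℝ) : Matrix (Fin 4) (Fin 4) ℝ :=
  fun k l => deriv (fun t => partialV μ (Function.update θ k t) l) (θ k)

open Function Matrix

noncomputable def pairPotential (x : ℝ) : ℝ := cos x + 1 / 2 * log (2 - 2 * cos x)

noncomputable def pairPotential' (x : ℝ) : ℝ := -sin x + sin x / (2 - 2 * cos x)

noncomputable def pairPotential'' (x : ℝ) : ℝ := -cos x - 1 / (2 - 2 * cos x)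

lemma pairPotential_neg (x : ℝ) : pairPotential (-x) = pairPotential x := by
  simp only [pairPotential, cos_neg]

-- Holds only through the convention `log 0 = 0`.
lemma pairPotential_zero : pairPotential 0 = 1 := by
  norm_num [pairPotential]

lemma pairPotential'_neg (x : ℝ) : pairPotential' (-x) = -pairPotential' x := by
  simp only [pairPotential', sin_neg, cos_neg]
  ring

lemma hasDerivAt_two_sub_two_mul_cos (x : ℝ) :
    HasDerivAt (fun y => 2 - 2 * cos y) (2 * sin x) x := by
  simpa using ((hasDerivAt_cos x).const_mul 2).const_sub 2

lemma hasDerivAt_pairPotential {x : ℝ} (hx : cos x ≠ 1) :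
    HasDerivAt pairPotential (pairPotential' x) x := by
  have hden : 2 - 2 * cos x ≠ 0 := by contrapose! hx; linarith
  refine ((hasDerivAt_cos x).add
    (((hasDerivAt_two_sub_two_mul_cos x).log hden).const_mul (1 / 2))).congr_deriv ?_
  rw [pairPotential']
  ring

lemma hasDerivAt_pairPotential' {x : ℝ} (hx : cos x ≠ 1) :
    HasDerivAt pairPotential' (pairPotential'' x) x := by
  have hden : 2 - 2 * cos x ≠ 0 := by contrapose! hx; linarith
  refine ((hasDerivAt_sin x).neg.add
    ((hasDerivAt_sin x).div (hasDerivAt_two_sub_two_mul_cos x) hden)).congr_deriv ?_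
  rw [pairPotential'']
  field_simp
  nlinarith [sin_sq_add_cos_sq x]

lemma V_eq_double_sum (μ θ : Fin 4 → ℝ) :
    V μ θ = (∑ i, μ i ^ 2 - ∑ i, ∑ j, μ i * μ j * pairPotential (θ i - θ j)) / 2 := by
  have hsymm (i j : Fin 4) : pairPotential (θ j - θ i) = pairPotential (θ i - θ j) := by
    rw [← pairPotential_neg, neg_sub]
  change -∑ i, ∑ j ∈ Finset.Ioi i, μ i * μ j * pairPotential (θ i - θ j) = _
  rw [Fin.sum_univ_four, show Finset.Ioi (0 : Fin 4) = {1, 2, 3} by decide,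
    show Finset.Ioi (1 : Fin 4) = {2, 3} by decide, show Finset.Ioi (2 : Fin 4) = {3} by decide,
    show Finset.Ioi (3 : Fin 4) = ∅ by decide]
  simp [Fin.sum_univ_four, pairPotential_zero, hsymm 0 1, hsymm 0 2, hsymm 0 3, hsymm 1 2,
    hsymm 1 3, hsymm 2 3]
  ring

lemma hasDerivAt_comp_update_sub {ι : Type*} [DecidableEq ι] {g g' : ℝ → ℝ} (θ : ι → ℝ)
    (k i j : ι) (hg : i ≠ j → HasDerivAt g (g' (θ i - θ j)) (θ i - θ j)) :
    HasDerivAt (fun t => g (update θ k t i - update θ k t j))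
      (((if i = k then 1 else 0) - if j = k then 1 else 0) * g' (θ i - θ j)) (θ k) := by
  by_cases hij : i = j
  · subst hij
    simpa using hasDerivAt_const (θ k) (g 0)
  have haffine (t : ℝ) : update θ k t i - update θ k t j =
      θ i - θ j + ((if i = k then 1 else 0) - if j = k then 1 else 0) * (t - θ k) := by
    simp only [update_apply]
    split_ifs <;> simp_all
  simp_rw [haffine]
  have hlin := (((hasDerivAt_id (θ k)).sub_const (θ k)).const_mul
    ((if i = k then 1 else 0) - if j = k then 1 else 0)).const_add (θ i - θ j)
  exact ((hg hij).comp_of_eq (θ k) hlin (by simp)).congr_deriv (by ring)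

def CollisionFree {ι : Type*} (θ : ι → ℝ) : Prop :=
  ∀ i j, i ≠ j → cos (θ i - θ j) ≠ 1

lemma eventually_collisionFree_update {ι : Type*} [Finite ι] [DecidableEq ι] {θ : ι → ℝ}
    (hθ : CollisionFree θ) (k : ι) : ∀ᶠ t in nhds (θ k), CollisionFree (update θ k t) := by
  simp only [CollisionFree, Filter.eventually_all]
  intro i j hij
  have hcont : Continuous fun t => cos (update θ k t i - update θ k t j) := by fun_prop
  exact hcont.continuousAt.eventually_ne (by simpa using hθ i j hij)

lemma partialV_eq (μ : Fin 4 → ℝ) {θ : Fin 4 → ℝ} (hθ : CollisionFree θ) (k : Fin 4) :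
    partialV μ θ k = -(μ k * ∑ j, μ j * pairPotential' (θ k - θ j)) := by
  have hderiv : HasDerivAt (fun t => V μ (update θ k t))
      ((-∑ i, ∑ j, μ i * μ j * (((if i = k then 1 else 0) - if j = k then 1 else 0) *
        pairPotential' (θ i - θ j))) / 2) (θ k) := by
    simp_rw [V_eq_double_sum]
    refine ((HasDerivAt.fun_sum fun i _ => HasDerivAt.fun_sum fun j _ =>
      (hasDerivAt_comp_update_sub (g := pairPotential) θ k i j fun hij => ?_).const_mul
        (μ i * μ j)).const_sub _).div_const 2
    exact hasDerivAt_pairPotential (hθ i j hij)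
  rw [partialV, hderiv.deriv]
  simp only [sub_mul, mul_sub, Finset.sum_sub_distrib, ite_mul, one_mul, zero_mul, mul_ite,
    mul_zero, Finset.sum_ite_eq', Finset.mem_univ, if_true, Finset.sum_ite_irrel,
    Finset.sum_const_zero]
  simp_rw [← neg_sub (θ k), pairPotential'_neg, Finset.mul_sum, ← Finset.sum_sub_distrib,
    neg_div, Finset.sum_div]
  congr 1
  exact Finset.sum_congr rfl fun j _ => by ring

-- For `l = k` both terms contain the junk value `pairPotential'' 0`, and they cancel.
lemma hessV_eq (μ : Fin 4 → ℝ) {θ : Fin 4 → ℝ} (hθ : CollisionFree θ) (k l : Fin 4) :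
    hessV μ θ k l = μ k * μ l * pairPotential'' (θ l - θ k) -
      if l = k then μ l * ∑ j, μ j * pairPotential'' (θ l - θ j) else 0 := by
  have hderiv : HasDerivAt
      (fun t => -(μ l * ∑ j, μ j * pairPotential' (update θ k t l - update θ k t j)))
      (-(μ l * ∑ j, μ j * (((if l = k then 1 else 0) - if j = k then 1 else 0) *
        pairPotential'' (θ l - θ j)))) (θ k) :=
    ((HasDerivAt.fun_sum fun j _ => (hasDerivAt_comp_update_sub (g := pairPotential') θ k l j
      fun hlj => hasDerivAt_pairPotential' (hθ l j hlj)).const_mul (μ j)).const_mul (μ l)).neg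
  rw [hessV, Filter.EventuallyEq.deriv_eq ((eventually_collisionFree_update hθ k).mono
    fun t ht => partialV_eq μ ht l), hderiv.deriv]
  simp only [sub_mul, mul_sub, Finset.sum_sub_distrib, ite_mul, one_mul, zero_mul, mul_ite,
    mul_zero, Finset.sum_ite_eq', Finset.mem_univ, if_true, Finset.sum_ite_irrel,
    Finset.sum_const_zero]
  split_ifs <;> ring

noncomputable def weightedHessian {ι : Type*} [Fintype ι] [DecidableEq ι] (μ θ : ι → ℝ) :
    Matrix ι ι ℝ :=
  of fun k l => μ l * pairPotential'' (θ l - θ k) -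
    if l = k then ∑ j, μ j * pairPotential'' (θ l - θ j) else 0

lemma inv_diagonal_mul_hessV {μ θ : Fin 4 → ℝ} (hμ : ∀ i, μ i ≠ 0) (hθ : CollisionFree θ) :
    (diagonal μ)⁻¹ * hessV μ θ = weightedHessian μ θ := by
  have hinv : (diagonal μ)⁻¹ = diagonal μ⁻¹ := by
    refine inv_eq_left_inv ?_
    rw [diagonal_mul_diagonal, ← diagonal_one]
    exact congrArg diagonal (funext fun i => inv_mul_cancel₀ (hμ i))
  ext k l
  rw [hinv, diagonal_mul, hessV_eq μ hθ, weightedHessian, of_apply, Pi.inv_apply]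
  split_ifs with hlk
  · subst hlk
    field_simp [hμ l]
  · field_simp [hμ k]
    ring

lemma cos_square_vertex_sub (i j : Fin 4) :
    cos ((![0, π / 2, π, 3 * π / 2] : Fin 4 → ℝ) i - ![0, π / 2, π, 3 * π / 2] j) =
      (![1, 0, -1, 0] : Fin 4 → ℝ) i * ![1, 0, -1, 0] j +
        (![0, 1, 0, -1] : Fin 4 → ℝ) i * ![0, 1, 0, -1] j := by
  have h3 : 3 * π / 2 = π / 2 + π := by ring
  rw [cos_sub]
  fin_cases i <;> fin_cases j <;> simp [h3, cos_add_pi, sin_add_pi]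

lemma collisionFree_square : CollisionFree (![0, π / 2, π, 3 * π / 2] : Fin 4 → ℝ) := by
  intro i j
  rw [cos_square_vertex_sub]
  fin_cases i <;> fin_cases j <;> norm_num

noncomputable def squareWeightedHessian (a b : ℝ) : Matrix (Fin 4) (Fin 4) ℝ :=
  !![b - 3 * a / 4, -(b / 2), 3 * a / 4, -(b / 2);
     -(a / 2), a - 3 * b / 4, -(a / 2), 3 * b / 4;
     3 * a / 4, -(b / 2), b - 3 * a / 4, -(b / 2);
     -(a / 2), 3 * b / 4, -(a / 2), a - 3 * b / 4]

lemma weightedHessian_square (a b : ℝ) :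
    weightedHessian ![a, b, a, b] ![0, π / 2, π, 3 * π / 2] = squareWeightedHessian a b := by
  ext k l
  fin_cases k <;> fin_cases l <;>
    simp [weightedHessian, squareWeightedHessian, pairPotential'', cos_square_vertex_sub,
      Fin.sum_univ_four] <;> ring

lemma charpoly_squareWeightedHessian (a b : ℝ) :
    (squareWeightedHessian a b).charpoly =
      X * (X - C ((2 * a - 3 * b) / 2)) * (X - C ((-3 * a + 2 * b) / 2)) * (X - C (a + b)) := by
  refine Polynomial.funext fun r => ?_
  rw [eval_charpoly, det_succ_row_zero]
  simp [squareWeightedHessian, Fin.sum_univ_succ, det_fin_three, Fin.succAbove]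
  ring

/-- Characteristic polynomial of the weighted Hessian at the (1+4)-gon with
`mu3 = mu1`, `mu4 = mu2`. -/
theorem square_weighted_hessian_charpoly (μ1 μ2 : ℝ) (h1 : μ1 ≠ 0) (h2 : μ2 ≠ 0) :
    ((Matrix.diagonal ![μ1, μ2, μ1, μ2])⁻¹ *
        hessV ![μ1, μ2, μ1, μ2] ![0, π / 2, π, 3 * π / 2]).charpoly =
      X * (X - C ((2 * μ1 - 3 * μ2) / 2)) * (X - C ((-3 * μ1 + 2 * μ2) / 2)) *
        (X - C (μ1 + μ2)) := by
  have hμ : ∀ i, (![μ1, μ2, μ1, μ2] : Fin 4 → ℝ) i ≠ 0 := by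
    intro i
    fin_cases i <;> assumption
  rw [inv_diagonal_mul_hessV hμ collisionFree_square, weightedHessian_square,
    charpoly_squareWeightedHessian]
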